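/- Let R be a symmetric positive semidefinite n×n real matrix, δ > 0, and Π an orthogonal projection matrix. If ‖Π R Π‖ ≤ 1, and ε > 0 is the smallest nonzero eigenvalue of R, then the spectral radius of Π R (δR + I)^{-1} Π is at most 1/(1 + εδ), which is strictly less than 1. -/

import Mathlib

open Matrix
open scoped ENNReal Matrix.Norms.L2Operator

/-- The spectral radius of a real matrix: the maximum modulus of its complex eigenvalues. -/
noncomputable def matSpecRad {ι : Type*} [Fintype ι] [DecidableEq ι]
    (Q : Matrix ι ι ℝ) : ℝ≥0∞ :=
  spectralRadius ℂ (Q.map (algebraMap ℝ ℂ))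

/-!
Write `S = R (δR + I)⁻¹ = g(R)` with `g(x) = x / (1 + δx)`. On the spectrum of `R`, which is `0`
together with eigenvalues `x ≥ ε`, we have `0 ≤ g(x) ≤ x / (1 + εδ)`, so the functional calculus
gives `0 ≤ S ≤ (1 + εδ)⁻¹ R` in the Loewner order. Conjugating by the self-adjoint `Π` yields
`0 ≤ ΠSΠ ≤ (1 + εδ)⁻¹ ΠRΠ ≤ (1 + εδ)⁻¹ I`, the last step because `‖ΠRΠ‖ ≤ 1`. Hence the symmetric
matrix `ΠSΠ` has its spectrum in `[0, (1 + εδ)⁻¹]`, and its complex spectrum is the same set.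
-/

open scoped MatrixOrder ComplexOrder

variable {n 𝕜 : Type*} [Fintype n] [DecidableEq n] [RCLike 𝕜]

namespace Matrix

theorem IsHermitian.le_algebraMap_of_l2_opNorm_le {A : Matrix n n 𝕜} (hA : A.IsHermitian) {r : ℝ}
    (hAr : ‖A‖ ≤ r) : A ≤ algebraMap ℝ (Matrix n n 𝕜) r := by
  rw [le_algebraMap_iff_spectrum_le (ha := hA.isSelfAdjoint)]
  intro x hx
  have hx' : (x : 𝕜) ∈ spectrum 𝕜 A := spectrum.algebraMap_mem_iff 𝕜 |>.mpr hx
  -- not `norm_one`: the matrix ring is trivial when `n` is empty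
  have h1 : ‖(1 : Matrix n n 𝕜)‖ ≤ 1 := by
    rw [← diagonal_one, l2_opNorm_diagonal]
    exact pi_norm_le_iff_of_nonneg zero_le_one |>.mpr fun _ => by simp
  calc x ≤ ‖(x : 𝕜)‖ := by simpa using le_abs_self x
    _ ≤ ‖A‖ * ‖(1 : Matrix n n 𝕜)‖ := spectrum.norm_le_norm_mul_of_mem hx'
    _ ≤ ‖A‖ := mul_le_of_le_one_right (norm_nonneg _) h1
    _ ≤ r := hAr

theorem IsHermitian.spectrum_map_algebraMap_complex {Q : Matrix n n ℝ} (hQ : Q.IsHermitian) :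
    spectrum ℂ (Q.map (algebraMap ℝ ℂ)) = Complex.ofReal '' spectrum ℝ Q := by
  ext k
  rw [mem_spectrum_iff_isRoot_charpoly, charpoly_map, hQ.charpoly_eq,
    hQ.spectrum_real_eq_range_eigenvalues]
  simp [Finset.prod_eq_zero_iff, sub_eq_zero, eq_comm (a := k)]

namespace PosSemidef

variable {R : Matrix n n 𝕜} {δ : ℝ}

theorem mul_inv_smul_add_one_eq_cfc (hR : R.PosSemidef) (hδ : 0 ≤ δ) :
    R * (δ • R + 1)⁻¹ = cfc (fun x => x * (δ * x + 1)⁻¹) R := by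
  have hfin := finite_real_spectrum (A := R)
  have hpos : ∀ x ∈ spectrum ℝ R, 0 < δ * x + 1 := fun x hx => by
    have := spectrum_nonneg_of_nonneg hR.nonneg hx
    positivity
  have hsum : δ • R + 1 = cfc (fun x => δ * x + 1) R := by
    rw [cfc_add .., cfc_const_mul .., cfc_id' .., cfc_const_one ..]
  have hinv : (δ • R + 1)⁻¹ = cfc (fun x => (δ * x + 1)⁻¹) R := by
    refine inv_eq_right_inv ?_
    rw [hsum, ← cfc_mul _ _ R (hfin.continuousOn _) (hfin.continuousOn _),
      cfc_congr (g := 1) fun x hx => mul_inv_cancel₀ (hpos x hx).ne', Pi.one_def, cfc_const_one ..]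
  rw [hinv, cfc_mul _ _ R (hfin.continuousOn _) (hfin.continuousOn _), cfc_id' ..]

theorem mul_inv_smul_add_one_nonneg (hR : R.PosSemidef) (hδ : 0 ≤ δ) : 0 ≤ R * (δ • R + 1)⁻¹ := by
  rw [hR.mul_inv_smul_add_one_eq_cfc hδ]
  refine cfc_nonneg fun x hx => ?_
  have := spectrum_nonneg_of_nonneg hR.nonneg hx
  positivity

theorem mul_inv_smul_add_one_le (hR : R.PosSemidef) (hδ : 0 ≤ δ) {ε : ℝ} (hε : 0 ≤ ε)
    (hεR : ∀ i, hR.1.eigenvalues i ≠ 0 → ε ≤ hR.1.eigenvalues i) :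
    R * (δ • R + 1)⁻¹ ≤ (1 + ε * δ)⁻¹ • R := by
  rw [hR.mul_inv_smul_add_one_eq_cfc hδ, ← cfc_id ℝ R, ← cfc_const_mul .., cfc_id ℝ R]
  refine cfc_mono (hf := (finite_real_spectrum (A := R)).continuousOn _) fun x hx => ?_
  rw [hR.1.spectrum_real_eq_range_eigenvalues] at hx
  obtain ⟨i, rfl⟩ := hx
  set μ := hR.1.eigenvalues i
  change μ * (δ * μ + 1)⁻¹ ≤ (1 + ε * δ)⁻¹ * μ
  rcases eq_or_ne μ 0 with h0 | h0
  · simp [h0]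
  · have hμ0 : 0 ≤ μ := hR.eigenvalues_nonneg i
    have hεμ : ε ≤ μ := hεR i h0
    rw [mul_comm]
    exact mul_le_mul_of_nonneg_right (inv_anti₀ (by positivity) (by nlinarith)) hμ0

end PosSemidef

end Matrix

theorem matSpecRad_le_of_nonneg_of_le_algebraMap {Q : Matrix n n ℝ} {r : ℝ} (hQ : 0 ≤ Q)
    (hQr : Q ≤ algebraMap ℝ (Matrix n n ℝ) r) : matSpecRad Q ≤ ENNReal.ofReal r := by
  rw [le_algebraMap_iff_spectrum_le] at hQr
  rw [matSpecRad, spectralRadius, hQ.posSemidef.1.spectrum_map_algebraMap_complex]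
  refine iSup₂_le ?_
  rintro - ⟨x, hx, rfl⟩
  have hx0 := spectrum_nonneg_of_nonneg hQ hx
  rw [← ENNReal.ofReal_coe_nnreal, coe_nnnorm, Complex.norm_real, Real.norm_of_nonneg hx0]
  exact ENNReal.ofReal_le_ofReal (hQr x hx)

theorem stmt_12_general {n : ℕ} (R : Matrix (Fin n) (Fin n) ℝ) (hR : R.PosSemidef)
    (δ : ℝ) (hδ : 0 < δ)
    (Proj : Matrix (Fin n) (Fin n) ℝ) (hProjSymm : Projᵀ = Proj)
    (hnorm : ‖Proj * R * Proj‖ ≤ 1)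
    (ε : ℝ) (hε : 0 < ε)
    (hεeig : (∃ i, hR.1.eigenvalues i = ε) ∧
      ∀ i, hR.1.eigenvalues i ≠ 0 → ε ≤ hR.1.eigenvalues i) :
    matSpecRad (Proj * R * (δ • R + 1)⁻¹ * Proj) ≤ ENNReal.ofReal (1 / (1 + ε * δ)) ∧
      matSpecRad (Proj * R * (δ • R + 1)⁻¹ * Proj) < 1 := by
  have hProj : IsSelfAdjoint Proj := by
    rw [IsSelfAdjoint, star_eq_conjTranspose, conjTranspose_eq_transpose_of_trivial, hProjSymm]
  have hconj {A B : Matrix (Fin n) (Fin n) ℝ} (h : A ≤ B) : Proj * A * Proj ≤ Proj * B * Proj :=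
    hProj.conjugate_le_conjugate h
  have hQ0 : 0 ≤ Proj * R * (δ • R + 1)⁻¹ * Proj := by
    simpa [mul_assoc] using hconj (hR.mul_inv_smul_add_one_nonneg hδ.le)
  have hPRP : Proj * R * Proj ≤ 1 := by
    have hPRP0 : 0 ≤ Proj * R * Proj := by simpa using hconj hR.nonneg
    simpa using hPRP0.posSemidef.1.le_algebraMap_of_l2_opNorm_le hnorm
  have hQle : Proj * R * (δ • R + 1)⁻¹ * Proj ≤ algebraMap ℝ _ (1 / (1 + ε * δ)) := calc
    Proj * R * (δ • R + 1)⁻¹ * Proj ≤ Proj * ((1 + ε * δ)⁻¹ • R) * Proj := by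
          simpa [mul_assoc] using hconj (hR.mul_inv_smul_add_one_le hδ.le hε.le hεeig.2)
    _ = (1 + ε * δ)⁻¹ • (Proj * R * Proj) := by rw [mul_smul_comm, smul_mul_assoc]
    _ ≤ (1 + ε * δ)⁻¹ • 1 := smul_le_smul_of_nonneg_left hPRP (by positivity)
    _ = algebraMap ℝ _ (1 / (1 + ε * δ)) := by rw [Algebra.algebraMap_eq_smul_one, one_div]
  have hrad := matSpecRad_le_of_nonneg_of_le_algebraMap hQ0 hQle
  have hlt : 1 / (1 + ε * δ) < 1 := by rw [div_lt_one (by positivity)]; nlinarith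
  exact ⟨hrad, hrad.trans_lt (ENNReal.ofReal_lt_one.mpr hlt)⟩

theorem stmt_12 {n : ℕ} (R : Matrix (Fin n) (Fin n) ℝ) (hR : R.PosSemidef)
    (δ : ℝ) (hδ : 0 < δ)
    (Proj : Matrix (Fin n) (Fin n) ℝ) (hProjSymm : Projᵀ = Proj)
    (hProjIdem : Proj * Proj = Proj)
    (hnorm : ‖Proj * R * Proj‖ ≤ 1)
    (ε : ℝ) (hε : 0 < ε)
    (hεeig : (∃ i, hR.1.eigenvalues i = ε) ∧
      ∀ i, hR.1.eigenvalues i ≠ 0 → ε ≤ hR.1.eigenvalues i) :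
    matSpecRad (Proj * R * (δ • R + 1)⁻¹ * Proj) ≤ ENNReal.ofReal (1 / (1 + ε * δ)) ∧
      matSpecRad (Proj * R * (δ • R + 1)⁻¹ * Proj) < 1 :=
  stmt_12_general R hR δ hδ Proj hProjSymm hnorm ε hε hεeig
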